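/- Let t ≥ 1, c > 0, ε ∈ (0, 1), and 0 < w ≤ 1. If (1/t) · log( log((1 + ε)t) / w ) ≥ c, then t ≤ (1/c) · log( (2/w) · log( (1 + ε)/(c w) ) ). -/
import Mathlib

/-- For positive `x`, `log x ≤ x / e`. -/
lemma log_le_div_e {x : ℝ} (hx : 0 < x) : Real.log x ≤ x / Real.exp 1 := by
  have he : (0:ℝ) < Real.exp 1 := Real.exp_pos 1
  have h1 : Real.log (x / Real.exp 1) ≤ x / Real.exp 1 - 1 :=
    Real.log_le_sub_one_of_pos (by positivity)
  rw [Real.log_div hx.ne' he.ne', Real.log_exp] at h1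
  linarith

/-- For positive `u`, `log u ≤ √u`. -/
lemma log_le_sqrt' {u : ℝ} (hu : 0 < u) : Real.log u ≤ Real.sqrt u := by
  have hs : 0 < Real.sqrt u := Real.sqrt_pos.mpr hu
  have h1 : Real.log (Real.sqrt u) ≤ Real.sqrt u / Real.exp 1 := log_le_div_e hs
  have h2 : Real.log (Real.sqrt u) = Real.log u / 2 := Real.log_sqrt hu.le
  have he : (2:ℝ) ≤ Real.exp 1 := by
    have := Real.add_one_le_exp 1; linarith
  have he0 : (0:ℝ) < Real.exp 1 := Real.exp_pos 1
  have h3 : Real.sqrt u / Real.exp 1 ≤ Real.sqrt u / 2 := by gcongr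
  rw [h2] at h1
  linarith

theorem stmt_12 (t c ε w : ℝ) (ht : 1 ≤ t) (hc : 0 < c) (hε : ε ∈ Set.Ioo (0:ℝ) 1)
    (hw0 : 0 < w) (hw1 : w ≤ 1)
    (h : c ≤ (1/t) * Real.log (Real.log ((1 + ε) * t) / w)) :
    t ≤ (1/c) * Real.log ((2 / w) * Real.log ((1 + ε) / (c * w))) := by
  obtain ⟨hε0, hε1⟩ := hε
  have ht0 : 0 < t := lt_of_lt_of_le one_pos ht
  set X := (1 + ε) * t with hXdef
  have hX1 : 1 < X := by nlinarith
  have hX0 : 0 < X := lt_trans one_pos hX1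
  have hlogX : 0 < Real.log X := Real.log_pos hX1
  -- c*t ≤ log (log X / w)
  have hct : c * t ≤ Real.log (Real.log X / w) := by
    have h' := mul_le_mul_of_nonneg_right h ht0.le
    calc c * t ≤ (1/t) * Real.log (Real.log X / w) * t := h'
      _ = Real.log (Real.log X / w) := by field_simp
  -- log X ≤ X
  have hlx : Real.log X ≤ X := by
    have := Real.log_le_sub_one_of_pos hX0; linarith
  have hct2 : c * t ≤ Real.log (X / w) := by
    refine hct.trans (Real.log_le_log (by positivity) ?_)
    gcongr
  -- use log u ≤ √u on u = X / w
  have hu0 : 0 < X / w := by positivity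
  have hsq : c * t ≤ Real.sqrt (X / w) := hct2.trans (log_le_sqrt' hu0)
  have hsq2 : (c * t) ^ 2 ≤ X / w := by
    have := Real.sq_sqrt hu0.le
    nlinarith [Real.sqrt_nonneg (X / w), mul_pos hc ht0]
  -- key quadratic bound: c² w t ≤ 1 + ε
  have hstar : c ^ 2 * w * t ≤ 1 + ε := by
    have h1 : (c * t) ^ 2 * w ≤ X := by
      have := mul_le_mul_of_nonneg_right hsq2 hw0.le
      calc (c*t)^2 * w ≤ X / w * w := this
        _ = X := by field_simp
    -- X = (1+ε) t ; divide by t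
    have h2 : c ^ 2 * w * t * t ≤ (1 + ε) * t := by nlinarith
    nlinarith [h2, ht0]
  -- c * w < 1 + ε
  have hcw : c * w < 1 + ε := by nlinarith [sq_nonneg (c * w - (1 + ε))]
  have hr1 : 1 < (1 + ε) / (c * w) := (one_lt_div (by positivity)).mpr hcw
  have hlogr : 0 < Real.log ((1 + ε) / (c * w)) := Real.log_pos hr1
  -- X ≤ ((1+ε)/(c w))²
  have hXr : X ≤ ((1 + ε) / (c * w)) ^ 2 := by
    rw [div_pow]
    rw [le_div_iff₀ (by positivity)]
    have : c ^ 2 * w ^ 2 * t ≤ (1 + ε) * w := by nlinarith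
    calc X * (c * w) ^ 2 = (1 + ε) * (c ^ 2 * w ^ 2 * t) := by ring
      _ ≤ (1 + ε) * ((1 + ε) * w) := by nlinarith
      _ ≤ (1 + ε) ^ 2 := by nlinarith
  -- hence log X ≤ 2 log r, so log X / w ≤ (2/w) log r
  have hlog2 : Real.log X ≤ 2 * Real.log ((1 + ε) / (c * w)) := by
    have := Real.log_le_log hX0 hXr
    rwa [Real.log_pow, Nat.cast_ofNat] at this
  have hfin : Real.log X / w ≤ (2 / w) * Real.log ((1 + ε) / (c * w)) := by
    rw [div_mul_eq_mul_div]
    gcongr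
  have hmain : c * t ≤ Real.log ((2 / w) * Real.log ((1 + ε) / (c * w))) := by
    refine hct.trans (Real.log_le_log (by positivity) hfin)
  calc t = c * t / c := by field_simp
    _ ≤ Real.log ((2 / w) * Real.log ((1 + ε) / (c * w))) / c := by gcongr
    _ = (1/c) * Real.log ((2 / w) * Real.log ((1 + ε) / (c * w))) := by ring
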